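/- arXiv:0903.1280 — 4 statements merged into one kernel-verified Lean document; each statement's English description precedes it below -/
import Mathlib

section
/- There do not exist positive integers x, y, z, w satisfying both z^2 = w^2 + y^2 and w^2 = y^2 + x^2. -/
/-! Multiplying the two equations gives `w ^ 4 - y ^ 4 = (x z) ^ 2`, and Fermat showed by
infinite descent that `w ^ 4 - y ^ 4 = c ^ 2` has no solution in positive integers. After
dividing out `gcd w y`, the parametrization of the primitive Pythagorean triple formed by
`y ^ 2`, `c` and `w ^ 2` yields a solution with a smaller `w`: directly when `y` is odd, and
after a second parametrization, of `w ^ 2 = a ^ 4 + 4 b ^ 4`, when `y` is even. -/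

namespace Nat

theorem Coprime.exists_eq_pow_of_mul_eq_pow {a b c k : ℕ} (hab : a.Coprime b)
    (h : a * b = c ^ k) : ∃ d, a = d ^ k :=
  _root_.exists_eq_pow_of_mul_eq_pow (by rw [Nat.isUnit_iff]; exact hab) h

theorem exists_of_sq_add_sq_eq_sq_of_coprime {a b c : ℕ} (h : a ^ 2 + b ^ 2 = c ^ 2)
    (hab : a.Coprime b) (ha : Odd a) :
    ∃ m n, a + n ^ 2 = m ^ 2 ∧ b = 2 * m * n ∧ c = m ^ 2 + n ^ 2 ∧ m.Coprime n := by
  have hT : PythagoreanTriple (a : ℤ) b c := by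
    unfold PythagoreanTriple
    exact_mod_cast (by linear_combination h : a * a + b * b = c * c)
  have hc : (0 : ℤ) < c := by
    have : 0 < c := pos_of_ne_zero (by rintro rfl; simp at h; simp [h.1] at ha)
    exact_mod_cast this
  obtain ⟨m, n, ha', hb', hc', hmn, -, -⟩ := hT.coprime_classification'
    (by rwa [Int.gcd_natCast_natCast]) (by exact_mod_cast Nat.odd_iff.mp ha) hc
  rw [Int.gcd_eq_natAbs] at hmn
  refine ⟨m.natAbs, n.natAbs, ?_, ?_, ?_, hmn⟩
  · zify; simp only [sq_abs]; linarith
  · simpa [Int.natAbs_mul] using congrArg Int.natAbs hb'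
  · zify; simpa only [sq_abs] using hc'

end Nat

def FourthPowSubSq (w : ℕ) : Prop :=
  ∃ y c : ℕ, 0 < y ∧ 0 < c ∧ w ^ 4 = y ^ 4 + c ^ 2

namespace FourthPowSubSq

theorem exists_coprime_le {w : ℕ} (hw : FourthPowSubSq w) :
    ∃ w' ≤ w, ∃ y c : ℕ, 0 < y ∧ 0 < c ∧ w'.Coprime y ∧ w' ^ 4 = y ^ 4 + c ^ 2 := by
  obtain ⟨y, c, hy, hc, h⟩ := hw
  obtain ⟨g, w', y', hg, hwy, rfl, rfl⟩ := Nat.exists_coprime' (Nat.gcd_pos_of_pos_right w hy)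
  have hgc : g ^ 2 ∣ c := by
    refine (Nat.pow_dvd_pow_iff two_ne_zero).mp ?_
    refine (Nat.dvd_add_right (⟨y' ^ 4, by ring⟩ : (g ^ 2) ^ 2 ∣ (y' * g) ^ 4)).mp ?_
    rw [← h]
    exact ⟨w' ^ 4, by ring⟩
  obtain ⟨c', rfl⟩ := hgc
  refine ⟨w', Nat.le_mul_of_pos_right w' hg, y', c', Nat.pos_of_mul_pos_right hy,
    Nat.pos_of_mul_pos_left hc, hwy, ?_⟩
  refine mul_left_cancel₀ (pow_ne_zero 4 hg.ne') ?_
  linear_combination h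

theorem coprime_of_eq {w y c : ℕ} (h : w ^ 4 = y ^ 4 + c ^ 2) (hwy : w.Coprime y) :
    y.Coprime c := by
  have : (y ^ 4).Coprime (c ^ 2 + y ^ 4) := by
    rw [add_comm, ← h]
    exact Nat.Coprime.pow 4 4 hwy.symm
  rw [Nat.coprime_add_self_right, Nat.coprime_pow_left_iff (by norm_num),
    Nat.coprime_pow_right_iff (by norm_num)] at this
  exact this

theorem exists_lt_of_odd {w y c : ℕ} (h : w ^ 4 = y ^ 4 + c ^ 2) (hyc : y.Coprime c)
    (hy : Odd y) (hc : 0 < c) : ∃ w' < w, FourthPowSubSq w' := by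
  obtain ⟨m, n, hymn, hcmn, hwmn, -⟩ := Nat.exists_of_sq_add_sq_eq_sq_of_coprime
    (by linear_combination h.symm : (y ^ 2) ^ 2 + c ^ 2 = (w ^ 2) ^ 2) (hyc.pow_left 2) hy.pow
  have hn : 0 < n := Nat.pos_of_mul_pos_left (hcmn ▸ hc)
  have hmw : m < w := lt_of_pow_lt_pow_left₀ 2 (Nat.zero_le w)
    (by rw [hwmn]; exact Nat.lt_add_of_pos_right (by positivity))
  refine ⟨m, hmw, n, y * w, hn, Nat.mul_pos hy.pos ((Nat.zero_le m).trans_lt hmw), ?_⟩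
  -- `m ^ 4 - n ^ 4 = (m ^ 2 - n ^ 2) (m ^ 2 + n ^ 2) = y ^ 2 w ^ 2`
  linear_combination (m ^ 2 + n ^ 2) * hymn.symm + y ^ 2 * hwmn.symm

theorem exists_lt_of_sq_eq_two_mul_mul {w y m n : ℕ} (hmn : m.Coprime n) (hn : Even n)
    (hn0 : 0 < n) (hy : y ^ 2 = 2 * m * n) (hw : w ^ 2 = m ^ 2 + n ^ 2) :
    ∃ w' < w, FourthPowSubSq w' := by
  obtain ⟨k, rfl⟩ := hn.two_dvd
  obtain ⟨t, rfl⟩ : 2 ∣ y := Nat.prime_two.dvd_of_dvd_pow ⟨m * (2 * k), by rw [hy]; ring⟩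
  have hm : Odd m := (Nat.Coprime.coprime_dvd_right (dvd_mul_right 2 k) hmn).odd_of_right
  have hmk : m * k = t ^ 2 := by linarith
  obtain ⟨a, rfl⟩ := (hmn.coprime_mul_left_right).exists_eq_pow_of_mul_eq_pow hmk
  obtain ⟨b, rfl⟩ := (hmn.coprime_mul_left_right).symm.exists_eq_pow_of_mul_eq_pow
    (by rw [mul_comm]; exact hmk)
  obtain ⟨P, Q, haPQ, hbPQ, hwPQ, hPQ⟩ := Nat.exists_of_sq_add_sq_eq_sq_of_coprime
    (by linear_combination hw.symm : (a ^ 2) ^ 2 + (2 * b ^ 2) ^ 2 = w ^ 2) hmn hm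
  have hPQb : P * Q = b ^ 2 := by linarith
  obtain ⟨r, rfl⟩ := hPQ.exists_eq_pow_of_mul_eq_pow hPQb
  obtain ⟨s, rfl⟩ := hPQ.symm.exists_eq_pow_of_mul_eq_pow (by rw [mul_comm]; exact hPQb)
  have hs : 0 < s := Nat.pos_of_ne_zero (by rintro rfl; simp at hPQb; omega)
  refine ⟨r, ?_, s, a, hs, (Nat.Odd.of_mul_right hm).pos, by linear_combination haPQ.symm⟩
  calc r ≤ (r ^ 2) ^ 2 := by rw [← pow_mul]; exact Nat.le_self_pow (by norm_num) r
    _ < (r ^ 2) ^ 2 + (s ^ 2) ^ 2 := Nat.lt_add_of_pos_right (by positivity)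
    _ = w := hwPQ.symm

theorem exists_lt_of_even {w y c : ℕ} (h : w ^ 4 = y ^ 4 + c ^ 2) (hyc : y.Coprime c)
    (hy : Even y) (hy0 : 0 < y) : ∃ w' < w, FourthPowSubSq w' := by
  have hc : Odd c := (hyc.coprime_dvd_left hy.two_dvd).odd_of_left
  obtain ⟨m, n, -, hymn, hwmn, hmn⟩ := Nat.exists_of_sq_add_sq_eq_sq_of_coprime
    (by linear_combination h.symm : c ^ 2 + (y ^ 2) ^ 2 = (w ^ 2) ^ 2) (hyc.pow_left 2).symm hc
  have hmn0 : 0 < m * n := by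
    have : 0 < 2 * (m * n) := by rw [← mul_assoc, ← hymn]; positivity
    omega
  have hmn2 : Even (m * n) := by
    obtain ⟨t, rfl⟩ := hy.two_dvd
    exact even_iff_two_dvd.mpr ⟨t ^ 2, by linarith⟩
  rcases Nat.even_mul.mp hmn2 with hm | hn
  · exact exists_lt_of_sq_eq_two_mul_mul hmn.symm hm (Nat.pos_of_mul_pos_right hmn0)
      (by rw [hymn]; ring) (by rw [hwmn]; ring)
  · exact exists_lt_of_sq_eq_two_mul_mul hmn hn (Nat.pos_of_mul_pos_left hmn0) hymn hwmn

end FourthPowSubSq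

theorem not_fourthPowSubSq (w : ℕ) : ¬ FourthPowSubSq w := by
  induction w using Nat.strong_induction_on with
  | _ w ih =>
  intro hw
  obtain ⟨w', hw'w, y, c, hy, hc, hwy, h⟩ := hw.exists_coprime_le
  have hyc := FourthPowSubSq.coprime_of_eq h hwy
  obtain ⟨w'', hw'', hsol⟩ := y.even_or_odd.elim
    (FourthPowSubSq.exists_lt_of_even h hyc · hy) (FourthPowSubSq.exists_lt_of_odd h hyc · hc)
  exact ih w'' (by omega) hsol

theorem stmt_1 : ¬ ∃ x y z w : ℕ, 0 < x ∧ 0 < y ∧ 0 < z ∧ 0 < w ∧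
    z^2 = w^2 + y^2 ∧ w^2 = y^2 + x^2 := by
  rintro ⟨x, y, z, w, hx, hy, hz, -, h1, h2⟩
  exact not_fourthPowSubSq w ⟨y, x * z, hy, Nat.mul_pos hx hz,
    by linear_combination (w ^ 2 + y ^ 2) * h2 + x ^ 2 * h1.symm⟩
end

section
/- If positive integers x, y, z satisfy x^2 + 2*y^2 = z^2, then there exist positive integers δ, k, λ with gcd(k, λ) = 1 such that x = δ*|k^2 - 2*λ^2|, y = δ*2*k*λ, and z = δ*(k^2 + 2*λ^2). -/
/-!
Dividing by `δ = gcd x y` reduces to a primitive solution, in which `x` and `z` are odd and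
`y = 2c` is even. Then `a = (z - x) / 2` and `b = (z + x) / 2` are coprime with `a * b = 2 * c ^ 2`,
so one of them is `2 * l ^ 2` and the other `k ^ 2`, with `c = k * l`. Hence
`z = a + b = k ^ 2 + 2 * l ^ 2` and `x = |b - a| = |k ^ 2 - 2 * l ^ 2|`.
-/

namespace Int

lemma exists_pos_sq_of_isCoprime_of_mul_eq_sq {a b c : ℤ} (ha : 0 < a) (hab : IsCoprime a b)
    (h : a * b = c ^ 2) : ∃ k, 0 < k ∧ a = k ^ 2 := by
  obtain ⟨k, hk | hk⟩ := sq_of_isCoprime hab h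
  · have hk0 : k ≠ 0 := by rintro rfl; simp [hk] at ha
    exact ⟨|k|, abs_pos.mpr hk0, by rw [sq_abs, hk]⟩
  · nlinarith [sq_nonneg k]

lemma exists_of_mul_eq_two_mul_sq_of_two_dvd {a b c : ℤ} (hb : 0 < b) (hc : 0 < c)
    (hab : IsCoprime a b) (h : a * b = 2 * c ^ 2) (ha2 : 2 ∣ a) :
    ∃ k l, 0 < k ∧ 0 < l ∧ IsCoprime k l ∧ a = 2 * l ^ 2 ∧ b = k ^ 2 ∧ c = k * l := by
  obtain ⟨a₁, rfl⟩ := ha2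
  have h₁ : a₁ * b = c ^ 2 := by linarith
  have ha₁ : 0 < a₁ := pos_of_mul_pos_left (h₁ ▸ by positivity) hb.le
  have hab₁ : IsCoprime a₁ b := hab.of_mul_left_right
  obtain ⟨l, hl, rfl⟩ := exists_pos_sq_of_isCoprime_of_mul_eq_sq ha₁ hab₁ h₁
  obtain ⟨k, hk, rfl⟩ :=
    exists_pos_sq_of_isCoprime_of_mul_eq_sq hb hab₁.symm (by rw [mul_comm, h₁])
  have hc : c = k * l :=
    (pow_left_inj₀ hc.le (by positivity) two_ne_zero).mp (by rw [← h₁]; ring)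
  exact ⟨k, l, hk, hl, ((IsCoprime.pow_iff two_pos two_pos).mp hab₁).symm, rfl, rfl, hc⟩

lemma exists_of_mul_eq_two_mul_sq {a b c : ℤ} (ha : 0 < a) (hb : 0 < b) (hc : 0 < c)
    (hab : IsCoprime a b) (h : a * b = 2 * c ^ 2) :
    ∃ k l, 0 < k ∧ 0 < l ∧ IsCoprime k l ∧ c = k * l ∧
      (a = 2 * l ^ 2 ∧ b = k ^ 2 ∨ a = k ^ 2 ∧ b = 2 * l ^ 2) := by
  rcases prime_two.dvd_mul.mp (h ▸ dvd_mul_right 2 _) with ha2 | hb2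
  · obtain ⟨k, l, hk, hl, hkl, rfl, rfl, rfl⟩ :=
      exists_of_mul_eq_two_mul_sq_of_two_dvd hb hc hab h ha2
    exact ⟨k, l, hk, hl, hkl, rfl, .inl ⟨rfl, rfl⟩⟩
  · obtain ⟨k, l, hk, hl, hkl, rfl, rfl, rfl⟩ :=
      exists_of_mul_eq_two_mul_sq_of_two_dvd ha hc hab.symm (by rw [mul_comm, h]) hb2
    exact ⟨k, l, hk, hl, hkl, rfl, .inr ⟨rfl, rfl⟩⟩

section SqAddTwoMulSq

variable {x y z : ℤ}

lemma even_iff_even_of_sq_add_two_mul_sq (h : x ^ 2 + 2 * y ^ 2 = z ^ 2) : Even x ↔ Even z := by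
  simpa [parity_simps] using congrArg Even h

lemma odd_of_sq_add_two_mul_sq (hxy : IsCoprime x y) (h : x ^ 2 + 2 * y ^ 2 = z ^ 2) : Odd x := by
  by_contra hx
  rw [not_odd_iff_even] at hx
  obtain ⟨v, rfl⟩ := even_iff_two_dvd.mp ((even_iff_even_of_sq_add_two_mul_sq h).mp hx)
  obtain ⟨u, rfl⟩ := even_iff_two_dvd.mp hx
  have hy : 2 ∣ y := prime_two.dvd_of_dvd_pow (n := 2) ⟨v ^ 2 - u ^ 2, by linarith⟩
  have := hxy.isUnit_of_dvd' (dvd_mul_right 2 u) hy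
  norm_num [isUnit_iff] at this

lemma isCoprime_of_sq_add_two_mul_sq (hxy : IsCoprime x y) (h : x ^ 2 + 2 * y ^ 2 = z ^ 2) :
    IsCoprime x z := by
  have hx2 : IsCoprime x 2 := (isCoprime_two_left.mpr (odd_of_sq_add_two_mul_sq hxy h)).symm
  have : IsCoprime x (2 * y ^ 2 + x * x) := (hx2.mul_right (hxy.pow_right)).add_mul_left_right x
  exact (IsCoprime.pow_right_iff two_pos).mp (by rw [← h]; convert this using 1; ring)

theorem exists_of_sq_add_two_mul_sq_of_isCoprime (hx : 0 < x) (hy : 0 < y) (hz : 0 < z)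
    (hxy : IsCoprime x y) (h : x ^ 2 + 2 * y ^ 2 = z ^ 2) :
    ∃ k l, 0 < k ∧ 0 < l ∧ IsCoprime k l ∧
      x = |k ^ 2 - 2 * l ^ 2| ∧ y = 2 * k * l ∧ z = k ^ 2 + 2 * l ^ 2 := by
  have hxz := isCoprime_of_sq_add_two_mul_sq hxy h
  obtain ⟨p, rfl⟩ := odd_of_sq_add_two_mul_sq hxy h
  obtain ⟨q, rfl⟩ : Odd z := by
    rw [← not_even_iff_odd, ← even_iff_even_of_sq_add_two_mul_sq h, not_even_iff_odd]
    exact ⟨p, rfl⟩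
  -- `a = (z - x) / 2` and `b = (z + x) / 2`
  have hy2 : y ^ 2 = 2 * ((q - p) * (q + p + 1)) := by linarith
  obtain ⟨c, rfl⟩ : 2 ∣ y :=
    even_iff_two_dvd.mp ((even_pow' two_ne_zero).mp ⟨_, hy2.trans (two_mul _)⟩)
  have hab : IsCoprime (q - p) (q + p + 1) := by
    obtain ⟨u, v, huv⟩ := hxz
    exact ⟨v - u, u + v, by linear_combination huv⟩
  have ha : 0 < q - p := by nlinarith
  obtain ⟨k, l, hk, hl, hkl, rfl, hsq | hsq⟩ :=
    exists_of_mul_eq_two_mul_sq (c := c) ha (by omega) (by omega) hab (by linarith)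
  · refine ⟨k, l, hk, hl, hkl, ?_, by ring, by linear_combination hsq.1 + hsq.2⟩
    rw [abs_of_nonneg (by linarith)]
    linear_combination hsq.2 - hsq.1
  · refine ⟨k, l, hk, hl, hkl, ?_, by ring, by linear_combination hsq.1 + hsq.2⟩
    rw [abs_of_nonpos (by linarith)]
    linear_combination hsq.2 - hsq.1

end SqAddTwoMulSq

end Int

theorem stmt_5 (x y z : ℤ) (hx : 0 < x) (hy : 0 < y) (hz : 0 < z)
    (h : x^2 + 2*y^2 = z^2) :
    ∃ δ k l : ℤ, 0 < δ ∧ 0 < k ∧ 0 < l ∧ Int.gcd k l = 1 ∧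
      x = δ * |k^2 - 2*l^2| ∧ y = δ * (2*k*l) ∧ z = δ * (k^2 + 2*l^2) := by
  obtain ⟨g, x', y', hg, hxy', rfl, rfl⟩ :=
    Int.exists_gcd_one' (Int.gcd_pos_of_ne_zero_left y hx.ne')
  replace hg : (0 : ℤ) < g := by exact_mod_cast hg
  obtain ⟨z', rfl⟩ : (g : ℤ) ∣ z :=
    (Int.pow_dvd_pow_iff two_ne_zero).mp ⟨x' ^ 2 + 2 * y' ^ 2, by rw [← h]; ring⟩
  have h' : x' ^ 2 + 2 * y' ^ 2 = z' ^ 2 :=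
    mul_left_cancel₀ (pow_ne_zero 2 hg.ne') (by linear_combination h)
  obtain ⟨k, l, hk, hl, hkl, rfl, rfl, rfl⟩ := Int.exists_of_sq_add_two_mul_sq_of_isCoprime
    (pos_of_mul_pos_left hx hg.le) (pos_of_mul_pos_left hy hg.le) (pos_of_mul_pos_right hz hg.le)
    (Int.isCoprime_iff_gcd_eq_one.mpr hxy') h'
  exact ⟨g, k, l, hg, hk, hl, Int.isCoprime_iff_gcd_eq_one.mp hkl,
    mul_comm _ _, mul_comm _ _, rfl⟩
end

section
/- There do not exist positive integers z, x, y with x even, y odd, and z^2 = x^4 + 4*y^4. -/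
/-! Descent on `|z|`. A prime dividing both `x` and `y` can be divided out, since its
square divides `z`; if `x = 2a`, then `z = 2w` and `y⁴ + 4a⁴ = w²`. If `x` is odd and coprime
to `y`, then `(x², 2y², z)` is a primitive Pythagorean triple, so `z = m² + n²` with `mn = y²`,
hence `m = p²`, `n = q²` and `x² + q⁴ = p⁴`. The primitive triple `(x, q², p²)` gives
`p² = r² + s²` with `rs = 2t²`, so `{r, s} = {c², 2d²}` and `c⁴ + 4d⁴ = p²` with
`|p| ≤ p² < z`. -/

theorem Int.exists_sq_of_isCoprime_of_mul_eq_sq {a b c : ℤ} (hab : IsCoprime a b) (ha : 0 ≤ a)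
    (h : a * b = c ^ 2) : ∃ d, a = d ^ 2 := by
  obtain ⟨d, hd | hd⟩ := Int.sq_of_isCoprime hab h
  · exact ⟨d, hd⟩
  · exact ⟨0, by nlinarith [sq_nonneg d]⟩

theorem Int.exists_eq_two_mul_sq_and_eq_sq {a b t : ℤ} (hab : IsCoprime a b) (ha : 0 ≤ a)
    (hb : 0 ≤ b) (ha2 : Even a) (h : a * b = 2 * t ^ 2) :
    ∃ c d, a = 2 * d ^ 2 ∧ b = c ^ 2 := by
  obtain ⟨a', rfl⟩ := ha2
  have hab' : IsCoprime a' b := by rw [← two_mul] at hab; exact hab.of_mul_left_right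
  have h' : a' * b = t ^ 2 := by linarith
  obtain ⟨d, rfl⟩ := exists_sq_of_isCoprime_of_mul_eq_sq hab' (by linarith) h'
  obtain ⟨c, rfl⟩ := exists_sq_of_isCoprime_of_mul_eq_sq hab'.symm hb (by linarith)
  exact ⟨c, d, by ring, rfl⟩

theorem exists_fourth_eq_sq_add_fourth {x y z : ℤ} (hy : y ≠ 0) (hx : Odd x)
    (hxy : IsCoprime x y) (hz : 0 < z) (h : x ^ 4 + 4 * y ^ 4 = z ^ 2) :
    ∃ p q, p ≠ 0 ∧ q ≠ 0 ∧ IsCoprime x q ∧ p ^ 4 = x ^ 2 + q ^ 4 ∧ p ^ 2 < z := by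
  have htriple : PythagoreanTriple (x ^ 2) (2 * y ^ 2) z := by
    unfold PythagoreanTriple; linear_combination h
  have hcop : IsCoprime (x ^ 2) (2 * y ^ 2) :=
    (Int.isCoprime_two_right.mpr hx).pow_left.mul_right hxy.pow
  obtain ⟨m, n, hx2, hy2, hz2, hmn, -, hm⟩ :=
    htriple.coprime_classification' (Int.isCoprime_iff_gcd_eq_one.mp hcop)
      (Int.odd_iff.mp hx.pow) hz
  have hmn' : IsCoprime m n := Int.isCoprime_iff_gcd_eq_one.mpr hmn
  have hmn_sq : m * n = y ^ 2 := by linarith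
  have hmn_pos : 0 < m * n := hmn_sq ▸ by positivity
  have hm_pos : 0 < m := hm.lt_of_ne (by rintro rfl; simp at hmn_pos)
  have hn_pos : 0 < n := pos_of_mul_pos_right hmn_pos hm
  obtain ⟨p, rfl⟩ := Int.exists_sq_of_isCoprime_of_mul_eq_sq hmn' hm hmn_sq
  obtain ⟨q, rfl⟩ := Int.exists_sq_of_isCoprime_of_mul_eq_sq hmn'.symm hn_pos.le
    (by rw [mul_comm, hmn_sq])
  have hxq : IsCoprime x q := by
    have : IsCoprime (x ^ 2) (q ^ 2) := by
      rw [show x ^ 2 = (p ^ 2) ^ 2 + q ^ 2 * -q ^ 2 by rw [hx2]; ring]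
      exact hmn'.pow_left.add_mul_left_left _
    exact (IsCoprime.pow_iff two_pos two_pos).mp this
  refine ⟨p, q, ?_, ?_, hxq, by linarith, ?_⟩
  · rintro rfl; simp at hm_pos
  · rintro rfl; simp at hn_pos
  · nlinarith

theorem exists_fourth_add_four_mul_fourth_eq_sq {x p q : ℤ} (hp : p ≠ 0) (hq : q ≠ 0)
    (hx : Odd x) (hxq : IsCoprime x q) (h : p ^ 4 = x ^ 2 + q ^ 4) :
    ∃ c d, c ≠ 0 ∧ d ≠ 0 ∧ c ^ 4 + 4 * d ^ 4 = p ^ 2 := by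
  have htriple : PythagoreanTriple x (q ^ 2) (p ^ 2) := by
    unfold PythagoreanTriple; linear_combination -h
  obtain ⟨r, s, -, hq2, hp2, hrs, -, hr⟩ :=
    htriple.coprime_classification' (Int.isCoprime_iff_gcd_eq_one.mp hxq.pow_right)
      (Int.odd_iff.mp hx) (by positivity)
  have hrs' : IsCoprime r s := Int.isCoprime_iff_gcd_eq_one.mpr hrs
  obtain ⟨t, rfl⟩ : Even q := (Int.even_pow' two_ne_zero).mp ⟨r * s, by linarith⟩
  have hrst : r * s = 2 * t ^ 2 := by linarith
  have hrs_pos : 0 < r * s := by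
    have : t ≠ 0 := by rintro rfl; simp at hq
    rw [hrst]; positivity
  have hs_pos : 0 < s := pos_of_mul_pos_right hrs_pos hr
  obtain ⟨c, d, hsum, hprod⟩ :
      ∃ c d, r ^ 2 + s ^ 2 = c ^ 4 + 4 * d ^ 4 ∧ r * s = 2 * c ^ 2 * d ^ 2 := by
    rcases Int.even_mul.mp (⟨t ^ 2, by rw [hrst]; ring⟩ : Even (r * s)) with hr2 | hs2
    · obtain ⟨c, d, rfl, rfl⟩ := Int.exists_eq_two_mul_sq_and_eq_sq hrs' hr hs_pos.le hr2 hrst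
      exact ⟨c, d, by ring, by ring⟩
    · obtain ⟨c, d, rfl, rfl⟩ :=
        Int.exists_eq_two_mul_sq_and_eq_sq hrs'.symm hs_pos.le hr hs2 (by rw [mul_comm, hrst])
      exact ⟨c, d, by ring, by ring⟩
  refine ⟨c, d, ?_, ?_, by rw [hp2, hsum]⟩
  all_goals rintro rfl; rw [hprod] at hrs_pos; simp at hrs_pos

def QuarticSol (x y z : ℤ) : Prop :=
  x ≠ 0 ∧ y ≠ 0 ∧ x ^ 4 + 4 * y ^ 4 = z ^ 2

namespace QuarticSol

variable {x y z : ℤ}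

theorem ne_zero (h : QuarticSol x y z) : z ≠ 0 := by
  rintro rfl
  obtain ⟨hx, -, h⟩ := h
  have : 0 < x ^ 4 := by positivity
  nlinarith [pow_two_nonneg (y ^ 2)]

theorem exists_natAbs_lt_of_not_isCoprime (h : QuarticSol x y z) (hxy : ¬IsCoprime x y) :
    ∃ x' y' z', QuarticSol x' y' z' ∧ z'.natAbs < z.natAbs := by
  obtain ⟨p, hp, hpx, hpy⟩ :=
    Nat.Prime.not_coprime_iff_dvd.mp (mt Int.isCoprime_iff_gcd_eq_one.mpr hxy)
  obtain ⟨x', rfl⟩ := Int.natCast_dvd.mpr hpx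
  obtain ⟨y', rfl⟩ := Int.natCast_dvd.mpr hpy
  obtain ⟨z', rfl⟩ : (p : ℤ) ^ 2 ∣ z := by
    rw [← Int.pow_dvd_pow_iff two_ne_zero, ← h.2.2]
    exact Dvd.intro (x' ^ 4 + 4 * y' ^ 4) (by ring)
  obtain ⟨hx, hy, heq⟩ := h
  have hp4 : (p : ℤ) ^ 4 ≠ 0 := by have := hp.ne_zero; positivity
  have h' : QuarticSol x' y' z' :=
    ⟨right_ne_zero_of_mul hx, right_ne_zero_of_mul hy,
      mul_left_cancel₀ hp4 (by linear_combination heq)⟩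
  refine ⟨x', y', z', h', ?_⟩
  rw [Int.natAbs_mul, lt_mul_iff_one_lt_left (Int.natAbs_pos.mpr h'.ne_zero), Int.natAbs_pow,
    Int.natAbs_natCast]
  exact Nat.one_lt_pow two_ne_zero hp.one_lt

theorem exists_natAbs_lt_of_even (h : QuarticSol x y z) (hx : Even x) :
    ∃ x' y' z', QuarticSol x' y' z' ∧ z'.natAbs < z.natAbs := by
  obtain ⟨a, rfl⟩ := hx
  obtain ⟨w, rfl⟩ : Even z :=
    (Int.even_pow' two_ne_zero).mp ⟨8 * a ^ 4 + 2 * y ^ 4, by rw [← h.2.2]; ring⟩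
  obtain ⟨hx, hy, heq⟩ := h
  have h' : QuarticSol y a w :=
    ⟨hy, by rintro rfl; simp at hx, mul_left_cancel₀ four_ne_zero (by linear_combination heq)⟩
  have := h'.ne_zero
  exact ⟨y, a, w, h', by omega⟩

theorem exists_natAbs_lt_of_odd (h : QuarticSol x y z) (hx : Odd x) (hxy : IsCoprime x y) :
    ∃ x' y' z', QuarticSol x' y' z' ∧ z'.natAbs < z.natAbs := by
  obtain ⟨p, q, hp, hq, hxq, hpq, hpz⟩ := exists_fourth_eq_sq_add_fourth h.2.1 hx hxy
    (abs_pos.mpr h.ne_zero) (by rw [sq_abs]; exact h.2.2)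
  obtain ⟨c, d, hc, hd, hcd⟩ := exists_fourth_add_four_mul_fourth_eq_sq hp hq hx hxq hpq
  refine ⟨c, d, p, ⟨hc, hd, hcd⟩, ?_⟩
  zify
  have := Int.natAbs_le_self_sq p
  rw [Int.natCast_natAbs] at this
  linarith

theorem exists_natAbs_lt (h : QuarticSol x y z) :
    ∃ x' y' z', QuarticSol x' y' z' ∧ z'.natAbs < z.natAbs := by
  by_cases hxy : IsCoprime x y
  · rcases Int.even_or_odd x with hx | hx
    · exact h.exists_natAbs_lt_of_even hx
    · exact h.exists_natAbs_lt_of_odd hx hxy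
  · exact h.exists_natAbs_lt_of_not_isCoprime hxy

end QuarticSol

theorem not_quarticSol (x y z : ℤ) : ¬QuarticSol x y z := by
  induction hn : z.natAbs using Nat.strong_induction_on generalizing x y z with
  | _ n ih =>
    intro h
    obtain ⟨x', y', z', h', hlt⟩ := h.exists_natAbs_lt
    exact ih _ (hn ▸ hlt) x' y' z' rfl h'

theorem stmt_11 : ¬ ∃ z x y : ℕ, 0 < z ∧ 0 < x ∧ 0 < y ∧
    Even x ∧ Odd y ∧ z^2 = x^4 + 4*y^4 := by
  rintro ⟨z, x, y, -, hx, hy, -, -, h⟩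
  exact not_quarticSol x y z ⟨by positivity, by positivity, by exact_mod_cast h.symm⟩
end

section
/- There do not exist positive integers x, y, t such that t^2 = x^2 + x^2 + y^2 (a Pythagorean box with two adjacent equal edges x) together with a positive integer d satisfying d^2 = x^2 + y^2. -/
/-!
The two diagonal relations give `d ^ 4 - x ^ 4 = (d ^ 2 + x ^ 2) y ^ 2 = (t y) ^ 2`, so a box as in
the statement would solve Fermat's equation `a ^ 4 - b ^ 4 = c ^ 2` in nonzero integers. That
equation has no such solution, by descent on `|a|`: after dividing out `gcd a b`, parametrise the
primitive Pythagorean triple `(b ^ 2, c, a ^ 2)` (`b` odd) or `(c, b ^ 2, a ^ 2)` (`b` even); in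
both cases the parameters produce a solution with smaller `|a|` (in the even case after a second
parametrisation, of `(q ^ 2, 2 p ^ 2, a)`).
-/

theorem Int.eq_sq_of_isCoprime_of_mul_eq_sq {a b c : ℤ} (ha : 0 ≤ a) (hab : IsCoprime a b)
    (h : a * b = c ^ 2) : ∃ r, a = r ^ 2 := by
  obtain ⟨r, hr | hr⟩ := Int.sq_of_isCoprime hab h
  · exact ⟨r, hr⟩
  · exact ⟨r, by nlinarith [sq_nonneg r]⟩

def Fermat42Sub (a b c : ℤ) : Prop :=
  b ≠ 0 ∧ c ≠ 0 ∧ b ^ 4 + c ^ 2 = a ^ 4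

namespace Fermat42Sub

variable {a b c : ℤ}

theorem ne_zero (h : Fermat42Sub a b c) : a ≠ 0 := by
  rintro rfl
  obtain ⟨hb, -, h⟩ := h
  have : 0 < b ^ 4 := by positivity
  nlinarith [sq_nonneg c]

theorem isCoprime (h : Fermat42Sub a b c) (hab : IsCoprime a b) : IsCoprime b c := by
  have : IsCoprime b (c ^ 2 + b ^ 3 * b) := by
    rw [← pow_succ, add_comm, h.2.2]
    exact hab.symm.pow_right
  exact (IsCoprime.pow_right_iff two_pos).mp this.of_add_mul_right_right

theorem of_mul_right {g : ℤ} (h : Fermat42Sub (a * g) (b * g) c) (hg : g ≠ 0) :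
    ∃ c', Fermat42Sub a b c' := by
  obtain ⟨hb, hc, h⟩ := h
  have hdvd : (g ^ 2) ^ 2 ∣ c ^ 2 := ⟨a ^ 4 - b ^ 4, by linear_combination h⟩
  obtain ⟨c', rfl⟩ := (Int.pow_dvd_pow_iff two_ne_zero).mp hdvd
  refine ⟨c', left_ne_zero_of_mul hb, right_ne_zero_of_mul hc, ?_⟩
  have hg4 : g ^ 4 ≠ 0 := pow_ne_zero 4 hg
  exact mul_left_cancel₀ hg4 (by linear_combination h)

theorem exists_natAbs_lt_of_odd (h : Fermat42Sub a b c) (hab : IsCoprime a b) (hb : b % 2 = 1) :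
    ∃ a' b' c', Fermat42Sub a' b' c' ∧ a'.natAbs < a.natAbs := by
  have htriple : PythagoreanTriple (b ^ 2) c (a ^ 2) := by
    unfold PythagoreanTriple; linear_combination h.2.2
  have hb2 : b ^ 2 % 2 = 1 := Int.odd_iff.mp (Int.odd_iff.mpr hb).pow
  obtain ⟨m, n, hbmn, hcmn, hamn, -, -, -⟩ := htriple.coprime_classification'
    (Int.isCoprime_iff_gcd_eq_one.mp (h.isCoprime hab).pow_left) hb2 (by positivity [h.ne_zero])
  have hn : n ≠ 0 := by
    rintro rfl
    exact h.2.1 (by simpa using hcmn)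
  refine ⟨m, n, a * b, ⟨hn, mul_ne_zero h.ne_zero h.1,
    by linear_combination a ^ 2 * hbmn + (m ^ 2 - n ^ 2) * hamn⟩, ?_⟩
  rw [Int.natAbs_lt_iff_sq_lt, hamn]
  have : 0 < n ^ 2 := by positivity
  linarith

theorem exists_of_sq_eq_four_mul_pow_four_add_pow_four {a p q : ℤ} (ha : a ≠ 0) (hp : p ≠ 0)
    (hq : q % 2 = 1) (hpq : Int.gcd (q ^ 2) (2 * p ^ 2) = 1)
    (h : a ^ 2 = (2 * p ^ 2) ^ 2 + (q ^ 2) ^ 2) :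
    ∃ a' b' c', Fermat42Sub a' b' c' ∧ a'.natAbs < a.natAbs := by
  have htriple : PythagoreanTriple (q ^ 2) (2 * p ^ 2) |a| := by
    unfold PythagoreanTriple; rw [abs_mul_abs_self]; linear_combination -h
  have hq2 : q ^ 2 % 2 = 1 := Int.odd_iff.mp (Int.odd_iff.mpr hq).pow
  obtain ⟨u, v, hquv, hpuv, hauv, huv, -, hu⟩ :=
    htriple.coprime_classification' hpq hq2 (abs_pos.mpr ha)
  have hp2 : u * v = p ^ 2 := by linarith
  have huv_pos : 0 < u * v := hp2 ▸ by positivity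
  have hu_pos : 0 < u := lt_of_le_of_ne hu (by rintro rfl; simp at huv_pos)
  have hv_pos : 0 < v := pos_of_mul_pos_right huv_pos hu
  have huv' := Int.isCoprime_iff_gcd_eq_one.mpr huv
  obtain ⟨r, rfl⟩ := Int.eq_sq_of_isCoprime_of_mul_eq_sq hu_pos.le huv' hp2
  obtain ⟨s, rfl⟩ := Int.eq_sq_of_isCoprime_of_mul_eq_sq hv_pos.le huv'.symm
    (c := p) (by linear_combination hp2)
  refine ⟨r, s, q, ⟨?_, ?_, by linear_combination hquv⟩, ?_⟩
  · rintro rfl; simp at hv_pos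
  · rintro rfl; simp at hq
  · rw [Int.natAbs_lt_iff_sq_lt, ← sq_abs a, hauv]
    nlinarith

theorem exists_of_sq_eq_sq_add_sq_of_sq_eq_two_mul {a b m n : ℤ} (ha : a ≠ 0) (hm : 0 < m)
    (hn : 0 < n) (hmn : Int.gcd m n = 1) (hpar : m % 2 = 0 ∧ n % 2 = 1 ∨ m % 2 = 1 ∧ n % 2 = 0)
    (hb : b ^ 2 = 2 * m * n) (h : a ^ 2 = m ^ 2 + n ^ 2) :
    ∃ a' b' c', Fermat42Sub a' b' c' ∧ a'.natAbs < a.natAbs := by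
  wlog hm2 : m % 2 = 0 generalizing m n
  · exact this hn hm (Int.gcd_comm _ _ ▸ hmn) (by omega) (by linear_combination hb)
      (by linear_combination h) (by omega)
  have hn2 : n % 2 = 1 := by omega
  obtain ⟨k, rfl⟩ := Int.dvd_of_emod_eq_zero hm2
  obtain ⟨b₀, rfl⟩ : 2 ∣ b :=
    Int.prime_two.dvd_of_dvd_pow (n := 2) ⟨2 * k * n, by linear_combination hb⟩
  have hkn : k * n = b₀ ^ 2 := by linarith
  have hk : 0 < k := by omega
  have hkn' : IsCoprime k n := (Int.isCoprime_iff_gcd_eq_one.mpr hmn).of_mul_left_right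
  obtain ⟨p, rfl⟩ := Int.eq_sq_of_isCoprime_of_mul_eq_sq hk.le hkn' hkn
  obtain ⟨q, rfl⟩ := Int.eq_sq_of_isCoprime_of_mul_eq_sq hn.le hkn'.symm
    (c := b₀) (by linear_combination hkn)
  have hp : p ≠ 0 := by rintro rfl; simp at hk
  have hq : q % 2 = 1 := Int.odd_iff.mp ((Int.odd_pow' two_ne_zero).mp (Int.odd_iff.mpr hn2))
  exact exists_of_sq_eq_four_mul_pow_four_add_pow_four ha hp hq (Int.gcd_comm _ _ ▸ hmn)
    (by linear_combination h)

theorem exists_natAbs_lt_of_even (h : Fermat42Sub a b c) (hab : IsCoprime a b) (hb : b % 2 = 0) :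
    ∃ a' b' c', Fermat42Sub a' b' c' ∧ a'.natAbs < a.natAbs := by
  have hbc := h.isCoprime hab
  have hc : c % 2 = 1 := by
    rcases Int.emod_two_eq_zero_or_one c with hc | hc
    · have := hbc.isUnit_of_dvd' (Int.dvd_of_emod_eq_zero hb) (Int.dvd_of_emod_eq_zero hc)
      simp [Int.isUnit_iff] at this
    · exact hc
  have htriple : PythagoreanTriple c (b ^ 2) (a ^ 2) := by
    unfold PythagoreanTriple; linear_combination h.2.2
  obtain ⟨m, n, -, hbmn, hamn, hmn, hpar, hm⟩ := htriple.coprime_classification'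
    (Int.isCoprime_iff_gcd_eq_one.mp hbc.symm.pow_right) hc (by positivity [h.ne_zero])
  have hmn_pos : 0 < m * n := by
    have : 0 < b ^ 2 := by positivity [h.1]
    linarith
  have hm_pos : 0 < m := lt_of_le_of_ne hm (by rintro rfl; simp at hmn_pos)
  exact exists_of_sq_eq_sq_add_sq_of_sq_eq_two_mul h.ne_zero hm_pos
    (pos_of_mul_pos_right hmn_pos hm) hmn hpar hbmn hamn

theorem exists_natAbs_lt (h : Fermat42Sub a b c) :
    ∃ a' b' c', Fermat42Sub a' b' c' ∧ a'.natAbs < a.natAbs := by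
  obtain ⟨g, a₀, b₀, hg, hab₀, rfl, rfl⟩ :=
    Int.exists_gcd_one' (Int.gcd_pos_of_ne_zero_left b h.ne_zero)
  obtain rfl | hg2 : g = 1 ∨ 2 ≤ g := by omega
  · simp only [Nat.cast_one, mul_one] at h ⊢
    have hab := Int.isCoprime_iff_gcd_eq_one.mpr hab₀
    rcases Int.emod_two_eq_zero_or_one b₀ with hb | hb
    · exact h.exists_natAbs_lt_of_even hab hb
    · exact h.exists_natAbs_lt_of_odd hab hb
  · obtain ⟨c₀, h₀⟩ := h.of_mul_right (by positivity)
    refine ⟨a₀, b₀, c₀, h₀, ?_⟩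
    rw [Int.natAbs_mul, Int.natAbs_natCast]
    have := Int.natAbs_pos.mpr h₀.ne_zero
    nlinarith

end Fermat42Sub

theorem not_fermat42Sub (a b c : ℤ) : ¬Fermat42Sub a b c := by
  induction hn : a.natAbs using Nat.strong_induction_on generalizing a b c with
  | _ n ih =>
    intro h
    obtain ⟨a', b', c', h', hlt⟩ := h.exists_natAbs_lt
    exact ih _ (hn ▸ hlt) a' b' c' rfl h'

theorem stmt_17 : ¬ ∃ x y t d : ℕ, 0 < x ∧ 0 < y ∧ 0 < t ∧ 0 < d ∧
    t^2 = x^2 + x^2 + y^2 ∧ d^2 = x^2 + y^2 := by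
  rintro ⟨x, y, t, d, hx, hy, ht, -, hbox, hface⟩
  refine not_fermat42Sub d x (t * y) ⟨by positivity, by positivity, ?_⟩
  have hbox : (t : ℤ) ^ 2 = x ^ 2 + x ^ 2 + y ^ 2 := by exact_mod_cast hbox
  have hface : (d : ℤ) ^ 2 = x ^ 2 + y ^ 2 := by exact_mod_cast hface
  linear_combination y ^ 2 * hbox - (d ^ 2 + x ^ 2 + y ^ 2) * hface
end
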